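/- arXiv:2206.07862 — 2 statements merged into one kernel-verified Lean document; each statement's English description precedes it below -/
import Mathlib

section
/- Let W = (H, Z) be an ew-system. An extended model (I*,ν*) of W is an optimal extended model (with respect to the recursive argmax definition) if and only if no extended model of W max-dominates (I*,ν*); and (I*,ν*) is a min-optimal extended model (with respect to the recursive argmin definition) if and only if no extended model of W min-dominates (I*,ν*). -/
open scoped Classical

/-- An ew-condition: a set of extended models, an integer weight,
a cost (coefficients) function on evaluations, and a positive integer level. -/
structure EWCond (ι ε : Type*) where
  Mod : Set (ι × ε)
  w : ℤ
  c : ε → ℝ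
  lvl : ℕ+

namespace EWCond

variable {ι ε : Type*}

/-- `I` is a model of the ew-condition `B`. -/
def IsModel (B : EWCond ι ε) (I : ι) : Prop := ∃ ν, (I, ν) ∈ B.Mod

/-- `⟦I ⊨ B⟧`: the weight of `B` if `I` is a model of `B`, and `0` otherwise. -/
noncomputable def costI (B : EWCond ι ε) (I : ι) : ℝ :=
  if B.IsModel I then (B.w : ℝ) else 0

/-- `⟦(I,ν) ⊨ B⟧`: `c(B)(ν)` if `(I,ν)` is an extended model of `B`, and `0` otherwise. -/
noncomputable def costE (B : EWCond ι ε) (p : ι × ε) : ℝ :=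
  if p ∈ B.Mod then B.c p.2 else 0

end EWCond

/-- An ew-system: the extended-model set of its hard theory
together with a finite (multi)set of ew-conditions. -/
structure EWSystem (ι ε : Type*) where
  H : Set (ι × ε)
  Z : Multiset (EWCond ι ε)

namespace EWSystem

variable {ι ε : Type*}

/-- `I` is a model of the ew-system `W`. -/
def IsModel (W : EWSystem ι ε) (I : ι) : Prop := ∃ ν, (I, ν) ∈ W.H

/-- `levels(W)`. -/
noncomputable def levels (W : EWSystem ι ε) : Finset ℕ+ :=
  (W.Z.map EWCond.lvl).toFinset

/-- `Σ_{B ∈ W_l} ⟦I ⊨ B⟧`. -/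
noncomputable def levelCostI (W : EWSystem ι ε) (l : ℕ+) (I : ι) : ℝ :=
  (W.Z.map (fun B => if B.lvl = l then B.costI I else 0)).sum

/-- `Σ_{B ∈ W_l} (⟦I ⊨ B⟧ + ⟦(I,ν) ⊨ B⟧)`. -/
noncomputable def levelCostE (W : EWSystem ι ε) (l : ℕ+) (p : ι × ε) : ℝ :=
  (W.Z.map (fun B => if B.lvl = l then B.costI p.1 + B.costE p else 0)).sum

/-- Elements of `S` at which `f` is `r`-extremal: for `r = (· ≤ ·)` these are
the maximizers of `f` on `S`; for `r = (fun a b => b ≤ a)`, the minimizers. -/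
def argOn {α : Type*} (r : ℝ → ℝ → Prop) (f : α → ℝ) (S : Set α) : Set α :=
  {x ∈ S | ∀ y ∈ S, r (f y) (f x)}

/-- Instantiating `r := maxR` yields the argmax-based (optimal) notions. -/
def maxR : ℝ → ℝ → Prop := fun a b => a ≤ b

/-- Instantiating `r := minR` yields the argmin-based (min-optimal) notions. -/
def minR : ℝ → ℝ → Prop := fun a b => b ≤ a

/-- The levels of `W` strictly greater than `l`, in ascending order. -/
noncomputable def levelsAbove (W : EWSystem ι ε) (l : ℕ+) : List ℕ+ :=
  (W.levels.filter (fun l' => l < l')).sort (· ≤ ·)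

/-- Processing an ascending list `a₁ < a₂ < ⋯ < aₖ` of levels:
`argOn r f_{a₁} (argOn r f_{a₂} (⋯ (argOn r f_{aₖ} (models of W))))`.
Hence `W.chainI r (W.levelsAbove l)` is the set over which the `l`-optimization
ranges: all models of `W` when `l` is the greatest level, and the
`succ(l)`-optimal models otherwise. -/
noncomputable def chainI (W : EWSystem ι ε) (r : ℝ → ℝ → Prop) : List ℕ+ → Set ι
  | [] => {I | W.IsModel I}
  | a :: rest => argOn r (W.levelCostI a) (W.chainI r rest)

/-- `I` is an `l`-optimal (for `r = maxR`; `l`-min-optimal for `r = minR`) model of `W`. -/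
def LOptI (W : EWSystem ι ε) (r : ℝ → ℝ → Prop) (l : ℕ+) (I : ι) : Prop :=
  I ∈ argOn r (W.levelCostI l) (W.chainI r (W.levelsAbove l))

/-- `I` is an optimal (for `r = maxR`; min-optimal for `r = minR`) model of `W`:
a model of `W` that is `l`-optimal for every level `l ∈ levels(W)`. -/
def OptimalI (W : EWSystem ι ε) (r : ℝ → ℝ → Prop) (I : ι) : Prop :=
  W.IsModel I ∧ ∀ l ∈ W.levels, W.LOptI r l I

/-- The extended-model analogue of `chainI`. -/
noncomputable def chainE (W : EWSystem ι ε) (r : ℝ → ℝ → Prop) : List ℕ+ → Set (ι × ε)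
  | [] => W.H
  | a :: rest => argOn r (W.levelCostE a) (W.chainE r rest)

/-- `(I,ν)` is an `l`-optimal (resp. `l`-min-optimal) extended model of `W`. -/
def LOptE (W : EWSystem ι ε) (r : ℝ → ℝ → Prop) (l : ℕ+) (p : ι × ε) : Prop :=
  p ∈ argOn r (W.levelCostE l) (W.chainE r (W.levelsAbove l))

/-- `(I,ν)` is an optimal (resp. min-optimal) extended model of `W`. -/
def OptimalE (W : EWSystem ι ε) (r : ℝ → ℝ → Prop) (p : ι × ε) : Prop :=
  p ∈ W.H ∧ ∀ l ∈ W.levels, W.LOptE r l p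

end EWSystem

variable {ι ε : Type*}

/-- `(I',ν')` max-dominates `(I,ν)`: for some level `l ∈ levels(W)`, the extended level
sums agree at every level greater than `l` and the level-`l` sum of `(I',ν')` is
strictly greater. -/
def MaxDominatesE (W : EWSystem ι ε) (p' p : ι × ε) : Prop :=
  ∃ l ∈ W.levels,
    (∀ l' : ℕ+, l < l' → W.levelCostE l' p = W.levelCostE l' p') ∧
    W.levelCostE l p < W.levelCostE l p'

/-- `(I',ν')` min-dominates `(I,ν)`. -/
def MinDominatesE (W : EWSystem ι ε) (p' p : ι × ε) : Prop :=
  ∃ l ∈ W.levels,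
    (∀ l' : ℕ+, l < l' → W.levelCostE l' p = W.levelCostE l' p') ∧
    W.levelCostE l p' < W.levelCostE l p

/-! For antisymmetric `r`, each level above `l` has a constant level sum on
`chainE r (levelsAbove l)`, and any extended model agreeing with a member of that set at all levels
above `l` belongs to it. So an `l`-optimal model is not beaten at `l` by anything agreeing with it
above `l`. Conversely, descending through the levels from the top shows that a non-dominated model
lies in every `chainE r (levelsAbove l)`, hence is `l`-optimal at every level. -/

namespace EWSystem

variable {W : EWSystem ι ε} {r : ℝ → ℝ → Prop} {p p' q : ι × ε}

def DominatesE (W : EWSystem ι ε) (r : ℝ → ℝ → Prop) (p' p : ι × ε) : Prop :=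
  ∃ l ∈ W.levels,
    (∀ l' : ℕ+, l < l' → W.levelCostE l' p = W.levelCostE l' p') ∧
    ¬ r (W.levelCostE l p') (W.levelCostE l p)

theorem dominatesE_maxR_iff : W.DominatesE maxR p' p ↔ MaxDominatesE W p' p := by
  simp only [DominatesE, MaxDominatesE, maxR, not_le]

theorem dominatesE_minR_iff : W.DominatesE minR p' p ↔ MinDominatesE W p' p := by
  simp only [DominatesE, MinDominatesE, minR, not_le]

theorem mem_levelsAbove {l l' : ℕ+} : l' ∈ W.levelsAbove l ↔ l' ∈ W.levels ∧ l < l' := by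
  simp [levelsAbove]

theorem levelsAbove_eq_cons {l a : ℕ+} {L : List ℕ+} (h : W.levelsAbove l = a :: L) :
    a ∈ W.levels ∧ W.levelsAbove a = L := by
  have hsorted : (a :: L).Pairwise (· < ·) := h ▸ (Finset.sortedLT_sort _).pairwise
  have hmem (x : ℕ+) : x ∈ a :: L ↔ x ∈ W.levels ∧ l < x := by rw [← h, mem_levelsAbove]
  have ⟨ha, hla⟩ := (hmem a).1 List.mem_cons_self
  refine ⟨ha, (Finset.sortedLT_sort _).pairwise.eq_of_mem_iff (List.pairwise_cons.1 hsorted).2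
    fun x => ?_⟩
  change x ∈ W.levelsAbove a ↔ _
  rw [mem_levelsAbove]
  constructor
  · rintro ⟨hx, hax⟩
    exact (List.mem_cons.1 ((hmem x).2 ⟨hx, hla.trans hax⟩)).resolve_left hax.ne'
  · intro hx
    exact ⟨((hmem x).1 (List.mem_cons_of_mem _ hx)).1, (List.pairwise_cons.1 hsorted).1 x hx⟩

theorem levelCostE_eq_zero_of_notMem {l : ℕ+} (hl : l ∉ W.levels) (p : ι × ε) :
    W.levelCostE l p = 0 := by
  refine Multiset.sum_eq_zero fun x hx => ?_
  obtain ⟨B, hB, rfl⟩ := Multiset.mem_map.1 hx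
  exact if_neg fun hBl => hl (Multiset.mem_toFinset.2 (Multiset.mem_map.2 ⟨B, hB, hBl⟩))

theorem chainE_subset (W : EWSystem ι ε) (r : ℝ → ℝ → Prop) : ∀ L, W.chainE r L ⊆ W.H
  | [] => subset_rfl
  | _ :: L => fun _ hp => chainE_subset W r L hp.1

theorem levelCostE_eq_of_mem_chainE (hanti : ∀ a b, r a b → r b a → a = b) :
    ∀ {L : List ℕ+} {a : ℕ+}, a ∈ L → p ∈ W.chainE r L → q ∈ W.chainE r L →
      W.levelCostE a p = W.levelCostE a q
  | b :: L, a, ha, hp, hq => by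
    rcases List.mem_cons.1 ha with rfl | ha
    · exact hanti _ _ (hq.2 p hp.1) (hp.2 q hq.1)
    · exact levelCostE_eq_of_mem_chainE hanti ha hp.1 hq.1

theorem mem_chainE_of_levelCostE_eq (hq : q ∈ W.H) :
    ∀ {L : List ℕ+}, p ∈ W.chainE r L → (∀ a ∈ L, W.levelCostE a p = W.levelCostE a q) →
      q ∈ W.chainE r L
  | [], _, _ => hq
  | b :: _, hp, heq =>
    ⟨mem_chainE_of_levelCostE_eq hq hp.1 fun a ha => heq a (List.mem_cons_of_mem _ ha),
      fun y hy => heq b List.mem_cons_self ▸ hp.2 y hy⟩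

theorem levelCostE_eq_of_mem_chainE_levelsAbove (hanti : ∀ a b, r a b → r b a → a = b)
    {l l' : ℕ+} (hll' : l < l') (hp : p ∈ W.chainE r (W.levelsAbove l))
    (hq : q ∈ W.chainE r (W.levelsAbove l)) : W.levelCostE l' p = W.levelCostE l' q := by
  by_cases hl' : l' ∈ W.levels
  · exact levelCostE_eq_of_mem_chainE hanti (mem_levelsAbove.2 ⟨hl', hll'⟩) hp hq
  · rw [levelCostE_eq_zero_of_notMem hl', levelCostE_eq_zero_of_notMem hl']

theorem lOptE_of_not_dominatesE (hanti : ∀ a b, r a b → r b a → a = b) {l : ℕ+}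
    (hl : l ∈ W.levels) (hp : p ∈ W.chainE r (W.levelsAbove l))
    (hnd : ¬ ∃ p' ∈ W.H, W.DominatesE r p' p) : W.LOptE r l p :=
  ⟨hp, fun q hq => by_contra fun hr => hnd ⟨q, W.chainE_subset r _ hq, l, hl,
    fun _ hll' => levelCostE_eq_of_mem_chainE_levelsAbove hanti hll' hp hq, hr⟩⟩

theorem mem_chainE_levelsAbove_of_not_dominatesE (hanti : ∀ a b, r a b → r b a → a = b)
    (hp : p ∈ W.H) (hnd : ¬ ∃ p' ∈ W.H, W.DominatesE r p' p) :
    ∀ {L : List ℕ+} {l : ℕ+}, W.levelsAbove l = L → p ∈ W.chainE r L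
  | [], _, _ => hp
  | _ :: _, _, h => by
    obtain ⟨ha, hL⟩ := levelsAbove_eq_cons h
    have hpL := mem_chainE_levelsAbove_of_not_dominatesE hanti hp hnd hL
    rw [← hL] at hpL ⊢
    exact lOptE_of_not_dominatesE hanti ha hpL hnd

theorem not_dominatesE_of_optimalE (hopt : W.OptimalE r p) :
    ¬ ∃ p' ∈ W.H, W.DominatesE r p' p := by
  rintro ⟨p', hp', l, hl, heq, hr⟩
  have hlopt := hopt.2 l hl
  exact hr (hlopt.2 p' (mem_chainE_of_levelCostE_eq hp' hlopt.1
    fun a ha => heq a (mem_levelsAbove.1 ha).2))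

theorem optimalE_iff_not_dominatesE (hanti : ∀ a b, r a b → r b a → a = b) (hp : p ∈ W.H) :
    W.OptimalE r p ↔ ¬ ∃ p' ∈ W.H, W.DominatesE r p' p :=
  ⟨not_dominatesE_of_optimalE, fun hnd => ⟨hp, fun _ hl => lOptE_of_not_dominatesE hanti hl
    (mem_chainE_levelsAbove_of_not_dominatesE hanti hp hnd rfl) hnd⟩⟩

end EWSystem

/-- an extended model `(I*,ν*)` of `W` is an optimal extended model iff
no extended model of `W` max-dominates it, and min-optimal iff none min-dominates it. -/
theorem stmt1 (W : EWSystem ι ε) (pstar : ι × ε) (hpstar : pstar ∈ W.H) :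
    (W.OptimalE EWSystem.maxR pstar ↔
      ¬ ∃ p' : ι × ε, p' ∈ W.H ∧ MaxDominatesE W p' pstar) ∧
    (W.OptimalE EWSystem.minR pstar ↔
      ¬ ∃ p' : ι × ε, p' ∈ W.H ∧ MinDominatesE W p' pstar) := by
  constructor
  · simpa only [EWSystem.dominatesE_maxR_iff] using
      EWSystem.optimalE_iff_not_dominatesE (r := EWSystem.maxR) (fun _ _ => le_antisymm) hpstar
  · simpa only [EWSystem.dominatesE_minR_iff] using
      EWSystem.optimalE_iff_not_dominatesE (r := EWSystem.minR)
      (fun _ _ h h' => le_antisymm h' h) hpstar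
end

section
/- Let W = (H, Z) be an ew-system and let S ⊆ Z be a set of ew-conditions all sharing the same level l. Suppose that for any two extended models (I,ν) and (I',ν') of W that are succ(l)-optimal (resp. succ(l)-min-optimal) — or for any two extended models of W, in case succ(l) is undefined, i.e., l is the greatest level of W — the equality Σ_{B ∈ S} (⟦I⊨B⟧ + ⟦(I,ν)⊨B⟧) = Σ_{B ∈ S} (⟦I'⊨B⟧ + ⟦(I',ν')⊨B⟧) holds. Then W and the ew-system (H, Z \ S) have the same optimal (resp. min-optimal) extended models. -/
open scoped Classical

/-!
Optimal extended models are exactly the final stage of the lexicographic chain of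
argmax (argmin) sets taken along the levels in descending order. Deleting `S` leaves
every level objective unchanged except the one at level `l`, which loses the summand
`Σ_{B ∈ S}`; by hypothesis that summand is constant on the set over which level `l` is
optimized, so every stage of the chain is unchanged. If `l` is no longer a level of
`(H, Z \ S)`, its objective there is zero, and a constant objective selects everything;
so both chains may be taken along the levels of `W`.
-/

namespace Finset

theorem sort_filter {α : Type*} [LinearOrder α] (s : Finset α) (p : α → Prop)
    [DecidablePred p] : (s.filter p).sort = s.sort.filter p := by
  refine List.SortedLT.eq_of_mem_iff (sortedLT_sort _) ?_ fun x => by simp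
  exact List.sortedLT_iff_pairwise.mpr
    ((List.sortedLT_iff_pairwise.mp (sortedLT_sort s)).filter _)

end Finset

namespace List

variable {α : Type*} [Preorder α] [DecidableLT α]

theorem filter_lt_cons_of_le {x a : α} (xs : List α) (hxa : x ≤ a) :
    (x :: xs).filter (a < ·) = xs.filter (a < ·) := by
  simp [not_lt_of_ge hxa]

theorem filter_lt_head_eq_self {x : α} {xs : List α} (hL : (x :: xs).Pairwise (· < ·)) :
    xs.filter (x < ·) = xs :=
  filter_eq_self.mpr fun _ hy => decide_eq_true (rel_of_pairwise_cons hL hy)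

end List

namespace EWSystem

variable {ι ε α : Type*} {r : ℝ → ℝ → Prop}

theorem argOn_const (hr : ∀ a, r a a) (c : ℝ) (D : Set α) :
    argOn r (fun _ => c) D = D :=
  Set.sep_eq_self_iff_mem_true.mpr fun _ _ _ _ => hr c

theorem argOn_eq_of_sub_const (hr : ∀ a b c, r (a + c) (b + c) ↔ r a b) {f g : α → ℝ}
    {D : Set α} (h : ∀ x ∈ D, ∀ y ∈ D, f x - g x = f y - g y) :
    argOn r f D = argOn r g D := by
  refine Set.sep_ext_iff.mpr fun x hx => forall₂_congr fun y hy => ?_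
  have hfy : g y + (f x - g x) = f y := by linarith [h x hx y hy]
  rw [← hr (g y) (g x) (f x - g x), hfy, add_sub_cancel]

theorem levelCostE_eq_zero {V : EWSystem ι ε} {a : ℕ+} (ha : a ∉ V.levels) :
    V.levelCostE a = 0 := by
  funext q
  refine Multiset.sum_eq_zero fun z hz => ?_
  obtain ⟨B, hB, rfl⟩ := Multiset.mem_map.mp hz
  exact if_neg fun h => ha (Multiset.mem_toFinset.mpr (Multiset.mem_map.mpr ⟨B, hB, h⟩))

theorem levelsAbove_eq_filter (V : EWSystem ι ε) (l : ℕ+) :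
    V.levelsAbove l = V.levels.sort.filter (l < ·) :=
  Finset.sort_filter _ _

theorem levelsAbove_eq_cons_min' (V : EWSystem ι ε) {l : ℕ+}
    (h : (V.levels.filter (l < ·)).Nonempty) :
    V.levelsAbove l = (V.levels.filter (l < ·)).min' h ::
      V.levelsAbove ((V.levels.filter (l < ·)).min' h) := by
  set m := (V.levels.filter (l < ·)).min' h
  have hm := Finset.mem_filter.mp (Finset.min'_mem _ h)
  refine List.SortedLT.eq_of_mem_iff (Finset.sortedLT_sort _) ?_ fun x => ?_
  · refine List.sortedLT_iff_pairwise.mpr (List.pairwise_cons.mpr ⟨fun y hy => ?_, ?_⟩)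
    · exact (Finset.mem_filter.mp ((Finset.mem_sort _).mp hy)).2
    · exact List.sortedLT_iff_pairwise.mp (Finset.sortedLT_sort _)
  · have hmin : ∀ y ∈ V.levels, l < y → m ≤ y :=
      fun y hy hly => Finset.min'_le _ _ (Finset.mem_filter.mpr ⟨hy, hly⟩)
    simp only [levelsAbove, Finset.mem_sort, Finset.mem_filter, List.mem_cons]
    constructor
    · rintro ⟨hx, hlx⟩
      rcases (hmin x hx hlx).eq_or_lt with hmx | hmx
      exacts [Or.inl hmx.symm, Or.inr ⟨hx, hmx⟩]
    · rintro (rfl | ⟨hx, hmx⟩)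
      exacts [hm, ⟨hx, hm.2.trans hmx⟩]

theorem levelsAbove_eq_nil (V : EWSystem ι ε) {l : ℕ+}
    (h : ¬(V.levels.filter (l < ·)).Nonempty) : V.levelsAbove l = [] := by
  rw [levelsAbove, Finset.not_nonempty_iff_eq_empty.mp h, Finset.sort_empty]

theorem mem_chainE_iff (V : EWSystem ι ε) {L : List ℕ+} (hL : L.Pairwise (· < ·))
    {p : ι × ε} :
    p ∈ V.chainE r L ↔
      p ∈ V.H ∧ ∀ a ∈ L, p ∈ argOn r (V.levelCostE a) (V.chainE r (L.filter (a < ·))) := by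
  induction L with
  | nil => simp [chainE]
  | cons x xs ih =>
    have hxs := List.pairwise_cons.mp hL
    have hrest :
        (∀ a ∈ xs, p ∈ argOn r (V.levelCostE a) (V.chainE r ((x :: xs).filter (a < ·)))) ↔
          ∀ a ∈ xs, p ∈ argOn r (V.levelCostE a) (V.chainE r (xs.filter (a < ·))) :=
      forall₂_congr fun a ha => by rw [List.filter_lt_cons_of_le xs (hxs.1 a ha).le]
    rw [List.forall_mem_cons, hrest, List.filter_lt_cons_of_le xs le_rfl,
      List.filter_lt_head_eq_self hL]
    constructor
    · intro hp
      obtain ⟨hH, hR⟩ := (ih hxs.2).mp hp.1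
      exact ⟨hH, hp, hR⟩
    · exact fun hp => hp.2.1

theorem optimalE_iff_mem_chainE (V : EWSystem ι ε) (p : ι × ε) :
    V.OptimalE r p ↔ p ∈ V.chainE r V.levels.sort := by
  rw [mem_chainE_iff V (List.sortedLT_iff_pairwise.mp (Finset.sortedLT_sort _))]
  simp only [OptimalE, LOptE, Finset.mem_sort, levelsAbove_eq_filter]

theorem chainE_filter_mem_levels (V : EWSystem ι ε) (hr : ∀ a, r a a) (L : List ℕ+) :
    V.chainE r (L.filter (· ∈ V.levels)) = V.chainE r L := by
  induction L with
  | nil => rfl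
  | cons x xs ih =>
    by_cases hx : x ∈ V.levels
    · rw [List.filter_cons_of_pos (by simpa using hx), chainE, chainE, ih]
    · rw [List.filter_cons_of_neg (by simpa using hx), ih, chainE, levelCostE_eq_zero hx]
      exact (argOn_const hr 0 _).symm

theorem optimalE_iff_mem_chainE_of_subset {V : EWSystem ι ε} {U : Finset ℕ+}
    (hU : V.levels ⊆ U) (hr : ∀ a, r a a) {p : ι × ε} :
    V.OptimalE r p ↔ p ∈ V.chainE r U.sort := by
  rw [optimalE_iff_mem_chainE, ← Finset.inter_eq_right.mpr hU, ← Finset.filter_mem_eq_inter,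
    Finset.sort_filter, chainE_filter_mem_levels V hr]

theorem chainE_congr {V V' : EWSystem ι ε} (hH : V.H = V'.H)
    (hr : ∀ a b c, r (a + c) (b + c) ↔ r a b) {L : List ℕ+} (hL : L.Pairwise (· < ·))
    (h : ∀ a ∈ L, ∀ q ∈ V.chainE r (L.filter (a < ·)),
      ∀ q' ∈ V.chainE r (L.filter (a < ·)),
      V.levelCostE a q - V'.levelCostE a q = V.levelCostE a q' - V'.levelCostE a q') :
    V.chainE r L = V'.chainE r L := by
  induction L with
  | nil => exact hH
  | cons x xs ih =>
    have hxs := List.pairwise_cons.mp hL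
    have hrest : V.chainE r xs = V'.chainE r xs := ih hxs.2 fun a ha => by
      simpa only [List.filter_lt_cons_of_le xs (hxs.1 a ha).le]
        using h a (List.mem_cons_of_mem x ha)
    have hx := h x List.mem_cons_self
    rw [List.filter_lt_cons_of_le xs le_rfl, List.filter_lt_head_eq_self hL] at hx
    rw [chainE, chainE, ← hrest]
    exact argOn_eq_of_sub_const hr hx

theorem levels_mk_sub_subset (W : EWSystem ι ε) (S : Multiset (EWCond ι ε)) :
    (mk W.H (W.Z - S)).levels ⊆ W.levels :=
  Multiset.toFinset_subset.mpr (Multiset.subset_of_le (Multiset.map_le_map tsub_le_self))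

theorem levelCostE_sub_levelCostE_mk_sub (W : EWSystem ι ε) {S : Multiset (EWCond ι ε)}
    (hS : S ≤ W.Z) (a : ℕ+) (q : ι × ε) :
    W.levelCostE a q - (mk W.H (W.Z - S)).levelCostE a q = (mk W.H S).levelCostE a q := by
  rw [sub_eq_iff_eq_add', levelCostE, levelCostE, levelCostE, ← Multiset.sum_add,
    ← Multiset.map_add, tsub_add_cancel_of_le hS]

theorem levelCostE_mk_of_forall_lvl_eq {H : Set (ι × ε)} {S : Multiset (EWCond ι ε)}
    {l : ℕ+} (hl : ∀ B ∈ S, B.lvl = l) (q : ι × ε) :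
    (mk H S).levelCostE l q = (S.map fun B => B.costI q.1 + B.costE q).sum :=
  congrArg Multiset.sum (Multiset.map_congr rfl fun B hB => if_pos (hl B hB))

theorem levelCostE_mk_eq_zero_of_ne {H : Set (ι × ε)} {S : Multiset (EWCond ι ε)} {l a : ℕ+}
    (hl : ∀ B ∈ S, B.lvl = l) (ha : a ≠ l) : (mk H S).levelCostE a = 0 := by
  refine levelCostE_eq_zero fun h => ha ?_
  obtain ⟨B, hB, rfl⟩ := Multiset.mem_map.mp (Multiset.mem_toFinset.mp h)
  exact hl B hB

theorem refl_of_eq_maxR_or_minR (hr : r = maxR ∨ r = minR) (a : ℝ) : r a a := by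
  rcases hr with rfl | rfl <;> exact le_refl a

theorem add_right_iff_of_eq_maxR_or_minR (hr : r = maxR ∨ r = minR) (a b c : ℝ) :
    r (a + c) (b + c) ↔ r a b := by
  rcases hr with rfl | rfl <;> exact add_le_add_iff_right c

end EWSystem

/-- if `S ⊆ Z` consists of ew-conditions all of level `l`, and any two
`succ(l)`-optimal (resp. `succ(l)`-min-optimal) extended models of `W` — or any two
extended models of `W` when `succ(l)` is undefined, i.e. `l` is the greatest level —
have equal sums `Σ_{B ∈ S} (⟦I ⊨ B⟧ + ⟦(I,ν) ⊨ B⟧)`, then `W` and `(H, Z \ S)` have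
the same optimal (resp. min-optimal) extended models. -/
theorem stmt12 {ι ε : Type*} (W : EWSystem ι ε) (S : Multiset (EWCond ι ε))
    (hS : S ≤ W.Z) (l : ℕ+) (hl : ∀ B ∈ S, B.lvl = l)
    (r : ℝ → ℝ → Prop) (hr : r = EWSystem.maxR ∨ r = EWSystem.minR)
    (heq : ∀ p p' : ι × ε,
      (if h : (W.levels.filter (fun l' => l < l')).Nonempty then
        W.LOptE r ((W.levels.filter (fun l' => l < l')).min' h) p ∧
        W.LOptE r ((W.levels.filter (fun l' => l < l')).min' h) p'
      else p ∈ W.H ∧ p' ∈ W.H) →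
      (S.map (fun B => B.costI p.1 + B.costE p)).sum =
      (S.map (fun B => B.costI p'.1 + B.costE p')).sum) :
    ∀ p : ι × ε, W.OptimalE r p ↔ (EWSystem.mk W.H (W.Z - S)).OptimalE r p := by
  have hconst : ∀ a, ∀ q ∈ W.chainE r (W.levelsAbove a),
      ∀ q' ∈ W.chainE r (W.levelsAbove a),
      (EWSystem.mk W.H S).levelCostE a q = (EWSystem.mk W.H S).levelCostE a q' := by
    intro a q hq q' hq'
    by_cases ha : a = l
    · subst ha
      rw [EWSystem.levelCostE_mk_of_forall_lvl_eq hl, EWSystem.levelCostE_mk_of_forall_lvl_eq hl]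
      refine heq q q' ?_
      split_ifs with h
      · rw [EWSystem.levelsAbove_eq_cons_min' W h] at hq hq'
        exact ⟨hq, hq'⟩
      · rw [EWSystem.levelsAbove_eq_nil W h] at hq hq'
        exact ⟨hq, hq'⟩
    · rw [EWSystem.levelCostE_mk_eq_zero_of_ne hl ha]
      rfl
  intro p
  have hrefl := EWSystem.refl_of_eq_maxR_or_minR hr
  rw [EWSystem.optimalE_iff_mem_chainE_of_subset subset_rfl hrefl,
    EWSystem.optimalE_iff_mem_chainE_of_subset (EWSystem.levels_mk_sub_subset W S) hrefl]
  refine Set.ext_iff.mp (EWSystem.chainE_congr (V := W) (V' := ⟨W.H, W.Z - S⟩) rfl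
    (EWSystem.add_right_iff_of_eq_maxR_or_minR hr)
    (List.sortedLT_iff_pairwise.mp (Finset.sortedLT_sort _)) fun a _ q hq q' hq' => ?_) p
  rw [← EWSystem.levelsAbove_eq_filter] at hq hq'
  simp only [EWSystem.levelCostE_sub_levelCostE_mk_sub W hS]
  exact hconst a q hq q' hq'
end
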